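/- Let T be an LTS with signature {A^r, A^l, A^bi}. For any two states p, q of T, p ≲cc q in 𝒯(T) if and only if p ≲cc q in 𝒯₀(T). -/
import Mathlib


/-- The three kinds of actions in a signature `{A^r, A^l, A^bi}`:
covariant (`A^r`), contravariant (`A^l`) and bivariant (`A^bi`). -/
inductive Kind : Type where
  | cov : Kind
  | con : Kind
  | bi : Kind
deriving DecidableEq

/-- A covariant-contravariant simulation over an LTS with state space `S` and
signature `sig : Act → Kind`. -/
def IsCCSimK {S Act : Type} (sig : Act → Kind) (tr : S → Act → S → Prop)
    (R : S → S → Prop) : Prop :=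
  ∀ p q, R p q →
    ((∀ a, (sig a = Kind.cov ∨ sig a = Kind.bi) →
        ∀ p', tr p a p' → ∃ q', tr q a q' ∧ R p' q') ∧
     (∀ a, (sig a = Kind.con ∨ sig a = Kind.bi) →
        ∀ q', tr q a q' → ∃ p', tr p a p' ∧ R p' q'))

/-- The covariant-contravariant simulation preorder `p ≲cc q` over an LTS with
signature `sig`. -/
def CCLEK {S Act : Type} (sig : Act → Kind) (tr : S → Act → S → Prop) (p q : S) : Prop :=
  ∃ R, IsCCSimK sig tr R ∧ R p q

/-- The actions of the transformed systems `𝒯(T)`: `Sum.inl a` is an original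
action `a ∈ A^r ∪ A^l`, while `Sum.inr (c, true)` is `c^r` and
`Sum.inr (c, false)` is `c^l` for a bivariant action `c ∈ A^bi`. -/
def barSig {Act : Type} (sig : Act → Kind) : Act ⊕ (Act × Bool) → Kind
  | .inl a => if sig a = Kind.con then Kind.con else Kind.cov
  | .inr (_, true) => Kind.cov
  | .inr (_, false) => Kind.con

/-- The transitions of `𝒯(T)`: transitions of `T` labelled in `A^r ∪ A^l` are
kept, and each transition `p →c p'` with `c ∈ A^bi` yields both
`p →c^r p'` and `p →c^l p'`. -/
def trBar {S Act : Type} (sig : Act → Kind) (tr : S → Act → S → Prop) :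
    S → Act ⊕ (Act × Bool) → S → Prop
  | p, .inl a, p' => tr p a p' ∧ (sig a = Kind.cov ∨ sig a = Kind.con)
  | p, .inr (c, _), p' => tr p c p' ∧ sig c = Kind.bi

/-- The actions of the transformed system `𝒯₀(T)`: `(d, true)` is `d^r` and
`(d, false)` is `d^l`. -/
def hatSig {Act : Type} : Act × Bool → Kind
  | (_, true) => Kind.cov
  | (_, false) => Kind.con

/-- The transitions of `𝒯₀(T)`, whose states are those of `T` (`some p`) plus
a fresh state `u` (`none`): every transition `p →d p'` of `T` yields
`p →d^l p'`; every transition `p →d p'` with `d ∈ A^r ∪ A^bi` also yields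
`p →d^r p'`; for every `a ∈ A^r` each state `p` of `T` has `p →a^l u`; and
`u →d^l u` for every `d ∈ A`. -/
def trHat {S Act : Type} (sig : Act → Kind) (tr : S → Act → S → Prop) :
    Option S → Act × Bool → Option S → Prop
  | some p, (d, false), some p' => tr p d p'
  | some p, (d, true), some p' => tr p d p' ∧ (sig d = Kind.cov ∨ sig d = Kind.bi)
  | some _, (a, false), none => sig a = Kind.cov
  | some _, (_, true), none => False
  | none, (_, false), none => True
  | none, (_, true), none => False
  | none, _, some _ => False

/-- Let `T` be an LTS with signature `{A^r, A^l, A^bi}`.  For any two states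
`p`, `q` of `T`, `p ≲cc q` in `𝒯(T)` if and only if `p ≲cc q` in `𝒯₀(T)`. -/
theorem ccle_tBar_iff_ccle_tHat {S Act : Type} [Fintype Act] (sig : Act → Kind)
    (tr : S → Act → S → Prop) (p q : S) :
    CCLEK (barSig sig) (trBar sig tr) p q ↔
    CCLEK hatSig (trHat sig tr) (some p) (some q) := by

  constructor
  · rintro ⟨R, hR, hpq⟩
    refine ⟨fun s t => (∃ p q, s = some p ∧ t = some q ∧ R p q) ∨ s = none, ?_,
      Or.inl ⟨p, q, rfl, rfl, hpq⟩⟩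
    rintro s t (⟨p, q, rfl, rfl, hpq⟩ | rfl)
    · obtain ⟨hcov, hcon⟩ := hR p q hpq
      constructor
      · rintro ⟨d, b⟩ hk p' hp'
        cases b
        · simp [hatSig] at hk
        · cases p' with
          | none => exact absurd hp' (by simp [trHat])
          | some p' =>
            obtain ⟨htr, hd⟩ := hp'
            rcases hd with hd | hd
            · obtain ⟨q', hq', hRq⟩ := hcov (Sum.inl d) (by simp [barSig, hd]) p'
                ⟨htr, Or.inl hd⟩
              exact ⟨some q', ⟨hq'.1, Or.inl hd⟩, Or.inl ⟨p', q', rfl, rfl, hRq⟩⟩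
            · obtain ⟨q', hq', hRq⟩ := hcov (Sum.inr (d, true)) (by simp [barSig]) p'
                ⟨htr, hd⟩
              exact ⟨some q', ⟨hq'.1, Or.inr hd⟩, Or.inl ⟨p', q', rfl, rfl, hRq⟩⟩
      · rintro ⟨d, b⟩ hk t' ht'
        cases b
        · cases t' with
          | none =>
            exact ⟨none, ht', Or.inr rfl⟩
          | some q' =>
            have htr : tr q d q' := ht'
            match hd : sig d with
            | Kind.cov =>
              exact ⟨none, hd, Or.inr rfl⟩
            | Kind.con =>
              obtain ⟨p', hp', hRp⟩ := hcon (Sum.inl d) (by simp [barSig, hd]) q'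
                ⟨htr, Or.inr hd⟩
              exact ⟨some p', hp'.1, Or.inl ⟨p', q', rfl, rfl, hRp⟩⟩
            | Kind.bi =>
              obtain ⟨p', hp', hRp⟩ := hcon (Sum.inr (d, false)) (by simp [barSig]) q'
                ⟨htr, hd⟩
              exact ⟨some p', hp'.1, Or.inl ⟨p', q', rfl, rfl, hRp⟩⟩
        · simp [hatSig] at hk
    · constructor
      · rintro ⟨d, b⟩ hk p' hp'
        cases b
        · simp [hatSig] at hk
        · cases p' <;> exact absurd hp' (by simp [trHat])
      · rintro ⟨d, b⟩ hk t' ht'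
        cases b
        · exact ⟨none, trivial, Or.inr rfl⟩
        · simp [hatSig] at hk
  · rintro ⟨Sh, hS, hpq⟩
    refine ⟨fun p q => Sh (some p) (some q), ?_, hpq⟩
    intro p q h
    obtain ⟨hcov, hcon⟩ := hS _ _ h
    constructor
    · rintro (a | ⟨c, b⟩) hk p' hp'
      · obtain ⟨htr, hd⟩ := hp'
        have hdcov : sig a = Kind.cov := by
          rcases hd with hd | hd
          · exact hd
          · simp [barSig, hd] at hk
        obtain ⟨t', ht', hS'⟩ := hcov (a, true) (Or.inl rfl) (some p') ⟨htr, Or.inl hdcov⟩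
        cases t' with
        | none => exact absurd ht' (by simp [trHat])
        | some q' => exact ⟨q', ⟨ht'.1, Or.inl hdcov⟩, hS'⟩
      · cases b
        · simp [barSig] at hk
        · obtain ⟨htr, hd⟩ := hp'
          obtain ⟨t', ht', hS'⟩ := hcov (c, true) (Or.inl rfl) (some p') ⟨htr, Or.inr hd⟩
          cases t' with
          | none => exact absurd ht' (by simp [trHat])
          | some q' => exact ⟨q', ⟨ht'.1, hd⟩, hS'⟩
    · rintro (a | ⟨c, b⟩) hk q' hq'
      · obtain ⟨htr, hd⟩ := hq'
        have hdcon : sig a = Kind.con := by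
          rcases hd with hd | hd
          · simp [barSig, hd] at hk
          · exact hd
        obtain ⟨s', hs', hS'⟩ := hcon (a, false) (Or.inl rfl) (some q') htr
        cases s' with
        | none => rw [show trHat sig tr (some p) (a, false) none = (sig a = Kind.cov) from rfl] at hs'; rw [hs'] at hdcon; exact absurd hdcon (by decide)
        | some p' => exact ⟨p', ⟨hs', Or.inr hdcon⟩, hS'⟩
      · cases b
        · obtain ⟨htr, hd⟩ := hq'
          obtain ⟨s', hs', hS'⟩ := hcon (c, false) (Or.inl rfl) (some q') htr
          cases s' with
          | none => rw [show trHat sig tr (some p) (c, false) none = (sig c = Kind.cov) from rfl] at hs'; rw [hs'] at hd; exact absurd hd (by decide)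
          | some p' => exact ⟨p', ⟨hs', hd⟩, hS'⟩
        · simp [barSig] at hk
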